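/- For any constants $a > 0$, $b \ge 0$, $c \ge 0$, the integral $\int_0^c \sqrt{\log(1 + b\,\varepsilon^{-1/a})}\, d\varepsilon$ is at most $c \sqrt{a^{-1} + \log(1 + b c^{-1/a})}$. -/

import Mathlib

open MeasureTheory Real Set

/-! With `K = a⁻¹ + log (1 + b c^{-1/a})`, the square root lies below its tangent line at `K`,
`√x ≤ (x + K) / (2√K)`, and the integrand's argument satisfies
`log (1 + b ε^{-1/a}) ≤ log (1 + b c^{-1/a}) + a⁻¹ log (c / ε)` on `(0, c]`. Since
`∫₀^c log (c / ε) dε = c`, integrating the resulting majorant gives exactly `c √K`. -/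

lemma sqrt_le_add_div_two_mul_sqrt {x K : ℝ} (hx : 0 ≤ x) (hK : 0 < K) :
    √x ≤ (x + K) / (2 * √K) := by
  rw [le_div_iff₀ (by positivity)]
  nlinarith [sq_nonneg (√x - √K), sq_sqrt hx, sq_sqrt hK.le]

lemma log_one_add_mul_rpow_neg_le {b p c ε : ℝ} (hb : 0 ≤ b) (hp : 0 ≤ p) (hε : 0 < ε)
    (hεc : ε ≤ c) :
    log (1 + b * ε ^ (-p)) ≤ log (1 + b * c ^ (-p)) + p * (log c - log ε) := by
  have hc : 0 < c := hε.trans_le hεc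
  have hratio : 1 ≤ (c / ε) ^ p := one_le_rpow ((one_le_div hε).2 hεc) hp
  have hsplit : b * ε ^ (-p) = b * c ^ (-p) * (c / ε) ^ p := by
    rw [div_rpow hc.le hε.le, rpow_neg hc.le, rpow_neg hε.le]
    field_simp
  have hu : 0 ≤ b * c ^ (-p) := mul_nonneg hb (rpow_nonneg hc.le _)
  calc log (1 + b * ε ^ (-p))
      ≤ log ((1 + b * c ^ (-p)) * (c / ε) ^ p) := by
        refine log_le_log (by positivity) ?_
        rw [hsplit]
        nlinarith
    _ = log (1 + b * c ^ (-p)) + p * (log c - log ε) := by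
        rw [log_mul (by positivity) (by positivity), log_rpow (by positivity),
          log_div hc.ne' hε.ne']

lemma integrableOn_log_sub_log {c : ℝ} (hc : 0 ≤ c) :
    IntegrableOn (fun ε ↦ log c - log ε) (Ioc 0 c) :=
  (intervalIntegrable_iff_integrableOn_Ioc_of_le hc).1
    (intervalIntegrable_const.sub intervalIntegral.intervalIntegrable_log')

lemma integral_log_sub_log {c : ℝ} (hc : 0 ≤ c) :
    ∫ ε in Ioc 0 c, (log c - log ε) = c := by
  rw [← intervalIntegral.integral_of_le hc,
    intervalIntegral.integral_sub intervalIntegrable_const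
      intervalIntegral.intervalIntegrable_log', integral_log]
  simp

lemma setIntegral_sqrt_le_of_le_log {f : ℝ → ℝ} {L p c : ℝ} (hL : 0 ≤ L) (hp : 0 < p)
    (hc : 0 ≤ c) (hf : ∀ ε ∈ Ioc 0 c, f ε ≤ L + p * (log c - log ε)) :
    ∫ ε in Ioc 0 c, √(f ε) ≤ c * √(p + L) := by
  set K := p + L
  have hK : 0 < K := by positivity
  set H : ℝ → ℝ := fun ε ↦ (L + K + p * (log c - log ε)) / (2 * √K)
  have hconst : IntegrableOn (fun _ ↦ L + K) (Ioc 0 c) :=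
    integrableOn_const measure_Ioc_lt_top.ne
  have hlog := (integrableOn_log_sub_log hc).const_mul p
  have hH_int : IntegrableOn H (Ioc 0 c) := (hconst.add hlog).div_const _
  have hH_integral : ∫ ε in Ioc 0 c, H ε = c * √K := by
    simp only [H]
    rw [integral_div, integral_add hconst hlog, integral_const_mul,
      integral_log_sub_log hc, setIntegral_const, Real.volume_real_Ioc_of_le hc, sub_zero, smul_eq_mul,
      div_eq_iff (by positivity)]
    have := mul_self_sqrt hK.le
    linear_combination (-2 * c) * this
  have hle : ∀ ε ∈ Ioc 0 c, √(f ε) ≤ H ε := by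
    intro ε ⟨hε, hεc⟩
    have hlog_nonneg : 0 ≤ log c - log ε := sub_nonneg.2 (log_le_log hε hεc)
    calc √(f ε) ≤ √(L + p * (log c - log ε)) := sqrt_le_sqrt (hf ε ⟨hε, hεc⟩)
      _ ≤ (L + p * (log c - log ε) + K) / (2 * √K) :=
        sqrt_le_add_div_two_mul_sqrt (by positivity) hK
      _ = H ε := by simp only [H]; ring
  calc ∫ ε in Ioc 0 c, √(f ε)
      ≤ ∫ ε in Ioc 0 c, H ε :=
        integral_mono_of_nonneg (.of_forall fun _ ↦ sqrt_nonneg _) hH_int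
          ((ae_restrict_iff' measurableSet_Ioc).2 (.of_forall hle))
    _ = c * √K := hH_integral

/-- For `a > 0`, `b ≥ 0`, `c ≥ 0`,
`∫_0^c √(log(1 + b ε^{-1/a})) dε ≤ c √(a⁻¹ + log(1 + b c^{-1/a}))`. -/
theorem stmt_1 (a b c : ℝ) (ha : 0 < a) (hb : 0 ≤ b) (hc : 0 ≤ c) :
    ∫ ε in Set.Ioc (0:ℝ) c, Real.sqrt (Real.log (1 + b * ε ^ (-(1/a))))
      ≤ c * Real.sqrt (a⁻¹ + Real.log (1 + b * c ^ (-(1/a)))) := by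
  rw [one_div]
  refine setIntegral_sqrt_le_of_le_log (Real.log_nonneg ?_) (inv_pos.2 ha) hc
    fun ε ⟨hε, hεc⟩ ↦ log_one_add_mul_rpow_neg_le hb (inv_pos.2 ha).le hε hεc
  have := mul_nonneg hb (rpow_nonneg hc (-a⁻¹))
  linarith
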